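/- arXiv:2407.15721 — 2 statements merged into one kernel-verified Lean document; each statement's English description precedes it below -/
import Mathlib

section
/- Let Γ_f = {0,…,n_f−1} and Γ_g = {0,…,n_g−1} be finite alphabets, f : Γ_f → Γ_f⁺ and g : Γ_g → Γ_g⁺ morphisms such that f(0) and g(0) both start with the letter 0 and have length greater than 1, let τ : Γ_f → Σ and ρ : Γ_g → Σ be codings, and assume every letter of Γ_g occurs in g^∞(0). For i = 0,1,…,n_g−1 let w_i be the prefix of g^∞(0) in front of the first occurrence of i in g^∞(0) (so g^∞(0)(|w_i|) = i and i does not occur in w_i), and let u_i be the factor of f^∞(0) occupying positions |g(w_i)| up to (but excluding) |g(w_i i)|, i.e. u_i = f^∞(0)_{|g(w_i)|, |g(w_i i)|}. Assume that for every i = 0,1,…,n_g−1 one has τ(u_i) = ρ(g(i)), and f(u_i) = u_{a_0} u_{a_1} ⋯ u_{a_{k−1}} where g(i) = a_0 a_1 ⋯ a_{k−1}. Then τ(f^∞(0)) = ρ(g^∞(0)). -/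
/-- A morphism `f : Γ → Γ⁺` applied to a finite word, by concatenation. -/
def applyW {Γ : Type*} (f : Γ → List Γ) (w : List Γ) : List Γ := w.flatMap f

/-- A morphism applied to an infinite sequence, by concatenation
(meaningful when every `f a` is nonempty: then the `n`-th letter of
`f(σ(0))f(σ(1))⋯` lies within the first `n+1` blocks). -/
def applyS {Γ : Type*} (f : Γ → List Γ) (σ : ℕ → Γ) (n : ℕ) : Γ :=
  ((List.range (n + 1)).flatMap fun i => f (σ i)).getD n (σ 0)

/-- A coding applied letterwise to an infinite sequence. -/
def applyC {Γ S : Type*} (τ : Γ → S) (σ : ℕ → Γ) : ℕ → S := fun n => τ (σ n)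

/-- The fixed point `f^∞(a)` of a morphism `f` with `f a = a·u`, `u` nonempty:
its `n`-th letter is the `n`-th letter of `f^(n+1)(a)` (which has length `> n`). -/
def fixpt {Γ : Type*} (f : Γ → List Γ) (a : Γ) (n : ℕ) : Γ :=
  ((applyW f)^[n + 1] [a]).getD n a

/-!
Write `σ = f^∞(a)`, `ς = g^∞(b)` and `U n = u(ς 0) ⋯ u(ς (n-1))`. The hypothesis
`f(u i) = u(g i)` makes `u` intertwine the two morphisms, so `f(U n) = U |g(ς_{0,n})|`,
and `ς_{0,n}` is a proper prefix of `g(ς_{0,n})`. Hence, starting from `U 1 = u b`, each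
`U (n+1)` is a prefix of `f(U n)`, and all `U n` are prefixes of `σ`. Applying the codings,
`τ(U n) = ρ(g(ς_{0,n}))` is simultaneously a prefix of `τ(σ)` and of `ρ(ς)`, of unbounded length.
-/

def IsSeqPrefix {α : Type*} (σ : ℕ → α) (l : List α) : Prop :=
  ∀ j (h : j < l.length), l[j] = σ j

namespace IsSeqPrefix

variable {α β : Type*} {σ σ' : ℕ → α} {l l' : List α}

theorem of_prefix (h : l <+: l') (h' : IsSeqPrefix σ l') : IsSeqPrefix σ l :=
  fun j hj => (h.getElem hj).trans (h' j (hj.trans_le h.length_le))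

theorem prefix_of_length_le (h : IsSeqPrefix σ l) (h' : IsSeqPrefix σ l')
    (hl : l.length ≤ l'.length) : l <+: l' := by
  rw [List.prefix_iff_eq_take]
  refine List.ext_getElem (by simp [hl]) fun j h₁ h₂ => ?_
  rw [List.getElem_take, h j h₁, h' j (h₁.trans_le hl)]

theorem map (τ : α → β) (h : IsSeqPrefix σ l) : IsSeqPrefix (applyC τ σ) (l.map τ) :=
  fun j hj => by simp [applyC, h j (by simpa using hj)]

theorem apply_eq (h : IsSeqPrefix σ l) (h' : IsSeqPrefix σ' l) {j : ℕ} (hj : j < l.length) :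
    σ j = σ' j :=
  (h j hj).symm.trans (h' j hj)

end IsSeqPrefix

theorem isSeqPrefix_range_map {α : Type*} (σ : ℕ → α) (n : ℕ) :
    IsSeqPrefix σ ((List.range n).map σ) :=
  fun j hj => by simp

section Morphism

variable {Γ Δ S : Type*}

theorem List.IsPrefix.iterate_applyW (f : Γ → List Γ) {v w : List Γ} (h : v <+: w) (n : ℕ) :
    (applyW f)^[n] v <+: (applyW f)^[n] w := by
  induction n generalizing v w with
  | zero => exact h
  | succ n ih => exact ih (h.flatMap f)

theorem length_le_length_applyW {f : Γ → List Γ} (hf : ∀ a, f a ≠ []) (w : List Γ) :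
    w.length ≤ (applyW f w).length := by
  simp only [applyW, List.length_flatMap]
  induction w with
  | nil => simp
  | cons a t ih =>
    have := List.length_pos_iff.mpr (hf a)
    simp only [List.length_cons, List.map_cons, List.sum_cons]
    omega

theorem length_lt_length_applyW_cons {f : Γ → List Γ} (hf : ∀ a, f a ≠ []) {a : Γ}
    (hlen : 1 < (f a).length) (t : List Γ) :
    (a :: t).length < (applyW f (a :: t)).length := by
  have := length_le_length_applyW hf t
  simp only [applyW, List.flatMap_cons, List.length_append, List.length_cons] at this ⊢
  omega

theorem applyW_flatMap {f : Γ → List Γ} {g : Δ → List Δ} {u : Δ → List Γ}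
    (hfu : ∀ i, applyW f (u i) = (g i).flatMap u) (l : List Δ) :
    applyW f (l.flatMap u) = (applyW g l).flatMap u := by
  simp only [applyW, List.flatMap_assoc] at hfu ⊢
  simp only [hfu]

theorem map_flatMap_eq_map_applyW {g : Δ → List Δ} {u : Δ → List Γ} {τ : Γ → S} {ρ : Δ → S}
    (hcode : ∀ i, (u i).map τ = (g i).map ρ) (l : List Δ) :
    (l.flatMap u).map τ = (applyW g l).map ρ := by
  simp only [applyW, List.map_flatMap, hcode]

end Morphism

section FixedPoint

variable {Γ : Type*} {f : Γ → List Γ} {a : Γ}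

theorem singleton_prefix_applyW (hfa : (f a).head? = some a) : [a] <+: applyW f [a] := by
  obtain ⟨t, ht⟩ := List.head?_eq_some_iff.mp hfa
  exact ⟨t, by simp [applyW, ht]⟩

theorem iterate_applyW_prefix_iterate (hfa : (f a).head? = some a) {m n : ℕ} (h : m ≤ n) :
    (applyW f)^[m] [a] <+: (applyW f)^[n] [a] := by
  induction n, h using Nat.le_induction with
  | base => exact List.prefix_rfl
  | succ n _ ih =>
    refine ih.trans ?_
    rw [Function.iterate_succ_apply]
    exact (singleton_prefix_applyW hfa).iterate_applyW f n

theorem length_iterate_applyW (hf : ∀ b, f b ≠ []) (hfa : (f a).head? = some a)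
    (hlen : 1 < (f a).length) (n : ℕ) : n + 1 ≤ ((applyW f)^[n] [a]).length := by
  induction n with
  | zero => simp
  | succ n ih =>
    obtain ⟨t, ht⟩ := iterate_applyW_prefix_iterate hfa (Nat.zero_le n)
    rw [← ht] at ih
    rw [Function.iterate_succ_apply', ← ht]
    exact ih.trans_lt (length_lt_length_applyW_cons hf hlen t)

theorem isSeqPrefix_iterate_applyW (hf : ∀ b, f b ≠ []) (hfa : (f a).head? = some a)
    (hlen : 1 < (f a).length) (n : ℕ) : IsSeqPrefix (fixpt f a) ((applyW f)^[n] [a]) := by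
  intro j hj
  have hj' : j < ((applyW f)^[j + 1] [a]).length :=
    (length_iterate_applyW hf hfa hlen (j + 1)).trans_lt' (by omega)
  rw [fixpt, List.getD_eq_getElem _ _ hj']
  rcases le_total n (j + 1) with h | h
  · exact (iterate_applyW_prefix_iterate hfa h).getElem hj
  · exact ((iterate_applyW_prefix_iterate hfa h).getElem hj').symm

theorem fixpt_zero (hfa : (f a).head? = some a) : fixpt f a 0 = a := by
  obtain ⟨t, ht⟩ := List.head?_eq_some_iff.mp hfa
  simp [fixpt, applyW, ht]

theorem IsSeqPrefix.applyW_fixpt (hf : ∀ b, f b ≠ []) (hfa : (f a).head? = some a)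
    (hlen : 1 < (f a).length) {l : List Γ} (h : IsSeqPrefix (fixpt f a) l) :
    IsSeqPrefix (fixpt f a) (applyW f l) := by
  have hl : l <+: (applyW f)^[l.length] [a] :=
    h.prefix_of_length_le (isSeqPrefix_iterate_applyW hf hfa hlen _)
      ((Nat.le_succ _).trans (length_iterate_applyW hf hfa hlen _))
  refine IsSeqPrefix.of_prefix ?_ (isSeqPrefix_iterate_applyW hf hfa hlen (l.length + 1))
  rw [Function.iterate_succ_apply']
  exact hl.flatMap f

theorem IsSeqPrefix.length_lt_length_applyW_fixpt (hf : ∀ b, f b ≠ [])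
    (hfa : (f a).head? = some a) (hlen : 1 < (f a).length) {l : List Γ} (hl : l ≠ [])
    (h : IsSeqPrefix (fixpt f a) l) : l.length < (applyW f l).length := by
  obtain ⟨b, t, rfl⟩ := List.exists_cons_of_ne_nil hl
  obtain rfl : b = a := (h 0 (by simp)).trans (fixpt_zero hfa)
  exact length_lt_length_applyW_cons hf hlen t

end FixedPoint

theorem applyC_fixpt_eq_of_intertwining {Γ Δ S : Type*} {f : Γ → List Γ} {g : Δ → List Δ}
    {a : Γ} {b : Δ} (hf : ∀ c, f c ≠ []) (hfa : (f a).head? = some a)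
    (hflen : 1 < (f a).length) (hg : ∀ c, g c ≠ []) (hgb : (g b).head? = some b)
    (hglen : 1 < (g b).length) {τ : Γ → S} {ρ : Δ → S} {u : Δ → List Γ}
    (hub : IsSeqPrefix (fixpt f a) (u b)) (hcode : ∀ i, (u i).map τ = (g i).map ρ)
    (hfu : ∀ i, applyW f (u i) = (g i).flatMap u) :
    applyC τ (fixpt f a) = applyC ρ (fixpt g b) := by
  set pre : ℕ → List Δ := fun n => (List.range n).map (fixpt g b)
  have hpre (n : ℕ) : IsSeqPrefix (fixpt g b) (pre n) := isSeqPrefix_range_map _ n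
  have hpre_prefix_applyW (n : ℕ) (hn : 0 < n) : pre (n + 1) <+: applyW g (pre n) :=
    (hpre (n + 1)).prefix_of_length_le ((hpre n).applyW_fixpt hg hgb hglen) <| by
      simpa [pre] using
        (hpre n).length_lt_length_applyW_fixpt hg hgb hglen (by simp [pre]; omega)
  have hU (n : ℕ) : IsSeqPrefix (fixpt f a) ((pre n).flatMap u) := by
    induction n with
    | zero => simp [IsSeqPrefix, pre]
    | succ n ih =>
      rcases Nat.eq_zero_or_pos n with rfl | hn
      · simpa [pre, fixpt_zero hgb] using hub
      · refine IsSeqPrefix.of_prefix ((hpre_prefix_applyW n hn).flatMap u) ?_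
        rw [← applyW_flatMap hfu]
        exact ih.applyW_fixpt hf hfa hflen
  funext k
  have hτ := (hU (k + 1)).map τ
  have hρ := ((hpre (k + 1)).applyW_fixpt hg hgb hglen).map ρ
  rw [map_flatMap_eq_map_applyW hcode] at hτ
  refine hτ.apply_eq hρ ?_
  simpa [pre] using (length_le_length_applyW hg (pre (k + 1))).trans_lt' (by simp [pre])

theorem stmt_1_general {S : Type*} (nf ng : ℕ) [NeZero nf] [NeZero ng]
    (f : Fin nf → List (Fin nf)) (g : Fin ng → List (Fin ng))
    (hf : ∀ a, f a ≠ []) (hg : ∀ a, g a ≠ [])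
    (hf0 : (f 0).head? = some 0) (hf0len : 1 < (f 0).length)
    (hg0 : (g 0).head? = some 0) (hg0len : 1 < (g 0).length)
    (τ : Fin nf → S) (ρ : Fin ng → S)
    -- `p i` is the position of the first occurrence of `i` in `g^∞(0)`;
    -- its existence expresses that every letter of `Γ_g` occurs in `g^∞(0)`
    (p : Fin ng → ℕ)
    (hpfirst : ∀ i, ∀ j < p i, fixpt g 0 j ≠ i)
    -- `w i` is the prefix of `g^∞(0)` in front of the first occurrence of `i`
    (w : Fin ng → List (Fin ng))
    (hw : ∀ i, w i = (List.range (p i)).map (fixpt g 0))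
    -- `u i = f^∞(0)_{|g(w_i)|, |g(w_i i)|}`
    (u : Fin ng → List (Fin nf))
    (hu : ∀ i, u i =
      (List.range (g i).length).map fun j => fixpt f 0 ((applyW g (w i)).length + j))
    (hcode : ∀ i, (u i).map τ = (g i).map ρ)
    (hfu : ∀ i, applyW f (u i) = (g i).flatMap u) :
    applyC τ (fixpt f 0) = applyC ρ (fixpt g 0) := by
  
  have hp0 : p 0 = 0 := by
    by_contra h
    exact hpfirst 0 0 (Nat.pos_of_ne_zero h) (fixpt_zero hg0)
  have hu0 : u 0 = (List.range (g 0).length).map (fixpt f 0) := by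
    simp [hu 0, hw 0, hp0, applyW]
  refine applyC_fixpt_eq_of_intertwining hf hf0 hf0len hg hg0 hg0len ?_ hcode hfu
  rw [hu0]
  exact isSeqPrefix_range_map _ _

/-- Theorem 3: the special instance of the main theorem where `v_i = w_i = g(i)`,
`w_i` is the prefix of `g^∞(0)` before the first occurrence of `i`, and `u_i` is
the factor `f^∞(0)_{|g(w_i)|, |g(w_i i)|}`. -/
theorem stmt_1 {S : Type*} (nf ng : ℕ) [NeZero nf] [NeZero ng]
    (f : Fin nf → List (Fin nf)) (g : Fin ng → List (Fin ng))
    (hf : ∀ a, f a ≠ []) (hg : ∀ a, g a ≠ [])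
    (hf0 : (f 0).head? = some 0) (hf0len : 1 < (f 0).length)
    (hg0 : (g 0).head? = some 0) (hg0len : 1 < (g 0).length)
    (τ : Fin nf → S) (ρ : Fin ng → S)
    -- `p i` is the position of the first occurrence of `i` in `g^∞(0)`;
    -- its existence expresses that every letter of `Γ_g` occurs in `g^∞(0)`
    (p : Fin ng → ℕ)
    (hp : ∀ i, fixpt g 0 (p i) = i)
    (hpfirst : ∀ i, ∀ j < p i, fixpt g 0 j ≠ i)
    -- `w i` is the prefix of `g^∞(0)` in front of the first occurrence of `i`
    (w : Fin ng → List (Fin ng))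
    (hw : ∀ i, w i = (List.range (p i)).map (fixpt g 0))
    -- `u i = f^∞(0)_{|g(w_i)|, |g(w_i i)|}`
    (u : Fin ng → List (Fin nf))
    (hu : ∀ i, u i =
      (List.range (g i).length).map fun j => fixpt f 0 ((applyW g (w i)).length + j))
    (hcode : ∀ i, (u i).map τ = (g i).map ρ)
    (hfu : ∀ i, applyW f (u i) = (g i).flatMap u) :
    applyC τ (fixpt f 0) = applyC ρ (fixpt g 0) :=
  stmt_1_general nf ng f g hf hg hf0 hf0len hg0 hg0len τ ρ p hpfirst w hw u hu hcode hfu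
end

section
/- Let fib = f^∞(0) be the binary Fibonacci sequence for the morphism f on {0,1} with f(0) = 01, f(1) = 0. Let g be the morphism on {0,1,2} with g(0) = 02, g(1) = 021, g(2) = 102, and let ρ be the coding with ρ(0) = ρ(1) = 0, ρ(2) = 1. Then fib = ρ(g^∞(0)). -/
section Morphisms

variable {Γ Δ : Type*}

theorem List.IsPrefix.getD_eq {l₁ l₂ : List Γ} (h : l₁ <+: l₂) {n : ℕ} (hn : n < l₁.length)
    (d : Γ) : l₂.getD n d = l₁.getD n d := by
  obtain ⟨t, rfl⟩ := h
  exact List.getD_append _ _ _ _ hn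

theorem applyW_append (f : Γ → List Γ) (u v : List Γ) :
    applyW f (u ++ v) = applyW f u ++ applyW f v :=
  List.flatMap_append

theorem iterate_applyW_append (f : Γ → List Γ) (n : ℕ) (u v : List Γ) :
    (applyW f)^[n] (u ++ v) = (applyW f)^[n] u ++ (applyW f)^[n] v := by
  induction n generalizing u v with
  | zero => rfl
  | succ n ih => simp only [Function.iterate_succ_apply, applyW_append, ih]

theorem iterate_applyW_ne_nil {f : Γ → List Γ} (hf : ∀ b, f b ≠ []) (n : ℕ) {w : List Γ}
    (hw : w ≠ []) : (applyW f)^[n] w ≠ [] := by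
  induction n generalizing w with
  | zero => exact hw
  | succ n ih =>
    obtain ⟨b, w, rfl⟩ := List.exists_cons_of_ne_nil hw
    exact ih (by simp [applyW, hf b])

theorem applyW_applyW (f g : Γ → List Γ) (w : List Γ) :
    applyW f (applyW g w) = applyW (fun a => applyW f (g a)) w :=
  List.flatMap_assoc

theorem semiconj_flatMap_applyW {d : Γ → List Δ} {h : Γ → List Γ} {g : Δ → List Δ}
    (H : ∀ a, (h a).flatMap d = applyW g (d a)) :
    Function.Semiconj (List.flatMap d) (applyW h) (applyW g) := by
  intro w
  induction w with
  | nil => rfl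
  | cons a w ih =>
    simp only [applyW, List.flatMap_cons, List.flatMap_append] at ih H ⊢
    rw [ih, H]

variable {f : Γ → List Γ} {a : Γ} {t : List Γ}

theorem iterate_applyW_succ_singleton (ha : f a = a :: t) (n : ℕ) :
    (applyW f)^[n + 1] [a] = (applyW f)^[n] [a] ++ (applyW f)^[n] t := by
  rw [Function.iterate_succ_apply, ← iterate_applyW_append]
  simp [applyW, ha]

theorem iterate_applyW_prefix (ha : f a = a :: t) {m n : ℕ} (h : m ≤ n) :
    (applyW f)^[m] [a] <+: (applyW f)^[n] [a] :=
  Nat.rel_of_forall_rel_succ_of_le (· <+: ·)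
    (fun k => iterate_applyW_succ_singleton ha k ▸ List.prefix_append _ _) h

theorem lt_length_iterate_applyW (ha : f a = a :: t) (ht : t ≠ []) (hf : ∀ b, f b ≠ [])
    (n : ℕ) : n < ((applyW f)^[n] [a]).length := by
  induction n with
  | zero => simp
  | succ n ih =>
    have := List.length_pos_iff.mpr (iterate_applyW_ne_nil hf n ht)
    rw [iterate_applyW_succ_singleton ha, List.length_append]
    omega

theorem fixpt_eq_getD_of_prefix (ha : f a = a :: t) (ht : t ≠ []) (hf : ∀ b, f b ≠ [])
    {n : ℕ} {w : List Γ} (h : (applyW f)^[n + 1] [a] <+: w) : fixpt f a n = w.getD n a :=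
  (h.getD_eq (Nat.lt_of_succ_lt (lt_length_iterate_applyW ha ht hf (n + 1))) a).symm

theorem fixpt_eq_getD_iterate (ha : f a = a :: t) (ht : t ≠ []) (hf : ∀ b, f b ≠ [])
    {n m : ℕ} (h : n < m) : fixpt f a n = ((applyW f)^[m] [a]).getD n a :=
  fixpt_eq_getD_of_prefix ha ht hf (iterate_applyW_prefix ha h)

end Morphisms

abbrev fibMorphism : Fin 2 → List (Fin 2) := ![[0, 1], [0]]

abbrev gMorphism : Fin 3 → List (Fin 3) := ![[0, 2], [0, 2, 1], [1, 0, 2]]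

abbrev rho : Fin 3 → Fin 2 := ![0, 0, 1]

def fibLift : Fin 2 → List (Fin 3) := ![[0, 2], [1]]

theorem semiconj_fibLift :
    Function.Semiconj (List.flatMap fibLift) (applyW fibMorphism)^[2] (applyW gMorphism) := by
  rw [show (applyW fibMorphism)^[2] = applyW fun a => applyW fibMorphism (fibMorphism a) from
    funext (applyW_applyW _ _)]
  exact semiconj_flatMap_applyW (by decide)

theorem flatMap_fibLift_iterate (n : ℕ) :
    ((applyW fibMorphism)^[2 * n] [0]).flatMap fibLift =
      (applyW gMorphism)^[n] [0] ++ (applyW gMorphism)^[n] [2] := by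
  rw [Function.iterate_mul, (semiconj_fibLift.iterate_right n).eq, ← iterate_applyW_append]
  rfl

theorem map_rho_flatMap_fibLift (w : List (Fin 2)) :
    (w.flatMap fibLift).map rho = applyW fibMorphism w := by
  rw [List.map_flatMap, applyW]
  congr
  funext a
  fin_cases a <;> rfl

/-- The Fibonacci sequence `fib = f^∞(0)` for `f(0)=01, f(1)=0` equals
`ρ(g^∞(0))` for `g(0)=02, g(1)=021, g(2)=102`, `ρ(0)=ρ(1)=0, ρ(2)=1`. -/
theorem stmt_10 :
    fixpt (![[0, 1], [0]] : Fin 2 → List (Fin 2)) 0 =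
      applyC (![0, 0, 1] : Fin 3 → Fin 2)
        (fixpt (![[0, 2], [0, 2, 1], [1, 0, 2]] : Fin 3 → List (Fin 3)) 0) := by
  funext n
  show fixpt fibMorphism 0 n = rho (fixpt gMorphism 0 n)
  have hfib : fixpt fibMorphism 0 n = ((applyW fibMorphism)^[2 * (n + 1) + 1] [0]).getD n 0 :=
    fixpt_eq_getD_iterate rfl (List.cons_ne_nil _ _) (by decide) (by omega)
  have hprefix : (applyW gMorphism)^[n + 1] [0] <+:
      ((applyW fibMorphism)^[2 * (n + 1)] [0]).flatMap fibLift := by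
    rw [flatMap_fibLift_iterate]
    exact List.prefix_append _ _
  have hg : fixpt gMorphism 0 n =
      (((applyW fibMorphism)^[2 * (n + 1)] [0]).flatMap fibLift).getD n 0 :=
    fixpt_eq_getD_of_prefix rfl (List.cons_ne_nil _ _) (by decide) hprefix
  rw [hfib, hg, ← List.getD_map (f := rho), map_rho_flatMap_fibLift,
    ← Function.iterate_succ_apply' (applyW fibMorphism)]
  rfl
end
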